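/- Let W be a maximal right path of a Fishburn tree T and let w be its first node. Then either w lies on the leftmost path from the root (the diagonal), or w is the left child of a node in treetops(T) that is not on the diagonal. -/

import Mathlib

inductive LTree where
  | nil : LTree
  | node : LTree → ℕ → LTree → LTree
deriving DecidableEq

namespace LTree

def size : LTree → ℕ
  | nil => 0
  | node L _ R => L.size + 1 + R.size

/-- The in-order sequence of labels. -/
def inorder : LTree → List ℕ
  | nil => []
  | node L r R => L.inorder ++ r :: R.inorder

/-- The maximum label (0 for the empty tree). -/
def maxL : LTree → ℕ
  | nil => 0
  | node L r R => max r (max L.maxL R.maxL)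

/-- Weakly decreasing along every root-to-leaf path. -/
def Decreasing : LTree → Prop
  | nil => True
  | node L r R => L.maxL ≤ r ∧ R.maxL ≤ r ∧ L.Decreasing ∧ R.Decreasing

/-- Strictly decreasing to the left: every label in a left subtree
is strictly smaller than the label of its parent. -/
def StrictLeft : LTree → Prop
  | nil => True
  | node L r R => L.maxL < r ∧ L.StrictLeft ∧ R.StrictLeft

/-- An endotree: decreasing, strictly decreasing to the left, labels in `[n]`. -/
def IsEndotree (T : LTree) : Prop :=
  T.Decreasing ∧ T.StrictLeft ∧ ∀ l ∈ T.inorder, 1 ≤ l ∧ l ≤ T.size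

/-- A regular endotree: the set of labels equals `[k]` for some `k ≤ n`. -/
def IsRegularEndotree (T : LTree) : Prop :=
  T.IsEndotree ∧ ∃ k ≤ T.size, ∀ l, l ∈ T.inorder ↔ (1 ≤ l ∧ l ≤ k)

end LTree

/-- An endofunction on `[n]`, identified with a word of length `n` over `[n]`. -/
def IsEndofun (x : List ℕ) : Prop := ∀ a ∈ x, 1 ≤ a ∧ a ≤ x.length

/-- A Cayley permutation: an endofunction whose image is `[k]` for some `k ≤ n`. -/
def IsCayley (x : List ℕ) : Prop :=
  IsEndofun x ∧ ∃ k ≤ x.length, ∀ j, j ∈ x ↔ (1 ≤ j ∧ j ≤ k)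

namespace LTree

/-- The list of (subtrees rooted at the) nodes of `T`, in in-order. -/
def nodes : LTree → List LTree
  | nil => []
  | node L r R => L.nodes ++ node L r R :: R.nodes

/-- Root label (0 for the empty tree). -/
def rootLabel : LTree → ℕ
  | nil => 0
  | node _ r _ => r

/-- Left subtree. -/
def leftT : LTree → LTree
  | nil => nil
  | node L _ _ => L

/-- Indices `i` (0-based) such that the `i`-th in-order node `v_{i+1}` is in
`treetops(T)`: either the first node or a node with nonempty left subtree. -/
def treetopsIdx (T : LTree) : Set ℕ :=
  {i | i < T.size ∧ (i = 0 ∨ (T.nodes.getD i nil).leftT ≠ nil)}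

/-- Indices `i` such that the label of the `i`-th in-order node does not occur
at any earlier in-order node. -/
def unseenIdx (T : LTree) : Set ℕ :=
  {i | i < T.size ∧
    ∀ j < i, (T.nodes.getD j nil).rootLabel ≠ (T.nodes.getD i nil).rootLabel}

/-- A Fishburn tree: a regular endotree with `treetops(T) = unseen(T)`. -/
def IsFishburnTree (T : LTree) : Prop :=
  T.IsRegularEndotree ∧ treetopsIdx T = unseenIdx T

end LTree

namespace LTree

/-- The subtree at a position (path from the root: `false` = left, `true` = right). -/
def subtreeAt : LTree → List Bool → Option LTree
  | t, [] => some t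
  | nil, _ :: _ => none
  | node L _ _, false :: q => L.subtreeAt q
  | node _ _ R, true :: q => R.subtreeAt q

/-- `p` is the position of a node of `T`. -/
def IsNodePos (T : LTree) (p : List Bool) : Prop :=
  ∃ L r R, T.subtreeAt p = some (node L r R)

/-- The label of the node at position `p` (0 if there is no node there). -/
def labelAt (T : LTree) (p : List Bool) : ℕ :=
  match T.subtreeAt p with
  | some t => t.rootLabel
  | none => 0

/-- `p` lies on the diagonal of `T`, i.e. on the maximal left path from the root. -/
def OnDiag (p : List Bool) : Prop := ∀ b ∈ p, b = false

/-- The node at position `p` is a treetop: the first in-order node (the deepest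
node of the diagonal) or a node with a left child. -/
def PosTreetop (T : LTree) (p : List Bool) : Prop :=
  IsNodePos T p ∧ (IsNodePos T (p ++ [false]) ∨ OnDiag p)

/-- Auxiliary computation of the index of the maximal right path through a node:
the state records whether the current node is on the diagonal and the current
path index. -/
def blabelAux : LTree → Bool → ℕ → List Bool → ℕ
  | _, _, cur, [] => cur
  | nil, _, _, _ :: _ => 0
  | node _ _ R, _, cur, true :: q => blabelAux R false cur q
  | node L r _, d, _, false :: q =>
      blabelAux L d (if d then L.rootLabel else r) q

/-- The index `b(u)` of the maximal right path containing the node at `p`: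
`b(root) = ℓ(root)`; `b(right child of u) = b(u)`; `b(left child of u)` is
`ℓ(left child)` if `u` is diagonal and `ℓ(u)` otherwise. -/
def blabel (T : LTree) (p : List Bool) : ℕ :=
  blabelAux T true T.rootLabel p

/-- The list of positions of the nodes of `T`. -/
def positions : LTree → List (List Bool)
  | nil => []
  | node L _ R =>
      [] :: (L.positions.map (List.cons false) ++ R.positions.map (List.cons true))

end LTree

namespace LTree

theorem subtreeAt_append (T : LTree) (q r : List Bool) :
    T.subtreeAt (q ++ r) = (T.subtreeAt q).bind (·.subtreeAt r) := by
  induction q generalizing T with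
  | nil => simp [subtreeAt]
  | cons b q ih =>
    cases T with
    | nil => rfl
    | node L x R => cases b <;> simp only [List.cons_append, subtreeAt, ih]

theorem IsNodePos.of_append {T : LTree} {q r : List Bool} (h : T.IsNodePos (q ++ r)) :
    T.IsNodePos q := by
  obtain ⟨L, x, R, hsub⟩ := h
  rw [subtreeAt_append] at hsub
  match hq : T.subtreeAt q, r with
  | some (node L' x' R'), _ => exact ⟨L', x', R', hq⟩
  | some nil, [] => simp [hq, subtreeAt] at hsub
  | some nil, _ :: _ => simp [hq, subtreeAt] at hsub
  | none, _ => simp [hq] at hsub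

theorem onDiag_append_false {q : List Bool} : OnDiag (q ++ [false]) ↔ OnDiag q := by
  simp [OnDiag]

end LTree

theorem fishburn_rpath_start_general (T : LTree)
    (p : List Bool) (hp : T.IsNodePos p)
    (hstart : p = [] ∨ p.getLast? = some false) :
    LTree.OnDiag p ∨
      ∃ q, p = q ++ [false] ∧ T.PosTreetop q ∧ ¬ LTree.OnDiag q := by
  rcases hstart with rfl | hlast
  · exact Or.inl nofun
  obtain ⟨q, rfl⟩ := List.getLast?_eq_some_iff.mp hlast
  by_cases hq : LTree.OnDiag q
  · exact Or.inl (LTree.onDiag_append_false.mpr hq)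
  · exact Or.inr ⟨q, rfl, ⟨hp.of_append, Or.inl hp⟩, hq⟩

/-- the first node `w` of a maximal right path of a Fishburn tree
(i.e. a node that is not a right child) either lies on the diagonal, or is the
left child of a non-diagonal treetop. -/
theorem fishburn_rpath_start (T : LTree) (h : T.IsFishburnTree)
    (p : List Bool) (hp : T.IsNodePos p)
    (hstart : p = [] ∨ p.getLast? = some false) :
    LTree.OnDiag p ∨
      ∃ q, p = q ++ [false] ∧ T.PosTreetop q ∧ ¬ LTree.OnDiag q :=
  fishburn_rpath_start_general T p hp hstart
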